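/- Let 0 < γ ≤ 1, let φ(t) = max(1 − γ·t, 0) for t ≥ 0, let 0 < c < v, and suppose the reputation cost r satisfies 0 < r < c and r > γ·v. If T_A, T_D ∈ [0, 1/γ] satisfy φ(T_A)·v = c and φ(T_D)·v = c − r, then T_D > T_A + 1 (so the defender has the last profitable move). -/
import Mathlib

/-- Reputation safety condition: with linear price decay
φ(t) = max(1 − γt, 0), 0 < c < v, 0 < r < c and r > γ·v, the break-even times
T_A, T_D ∈ [0, 1/γ] with φ(T_A)·v = c and φ(T_D)·v = c − r satisfy
T_D > T_A + 1, so the defender has the last profitable move. -/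
theorem reputation_safety_condition (γ c v r TA TD : ℝ)
    (hγ0 : 0 < γ) (hγ1 : γ ≤ 1)
    (hc : 0 < c) (hcv : c < v)
    (hr0 : 0 < r) (hrc : r < c) (hrγ : r > γ * v)
    (hTA : TA ∈ Set.Icc (0 : ℝ) (1 / γ)) (hTD : TD ∈ Set.Icc (0 : ℝ) (1 / γ))
    (hA : max (1 - γ * TA) 0 * v = c) (hD : max (1 - γ * TD) 0 * v = c - r) :
    TD > TA + 1 := by
  obtain ⟨hTA0, hTA1⟩ := hTA
  obtain ⟨hTD0, hTD1⟩ := hTD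
  have hA' : (0 : ℝ) ≤ 1 - γ * TA := by
    have := (le_div_iff₀ hγ0).mp hTA1
    nlinarith
  have hD' : (0 : ℝ) ≤ 1 - γ * TD := by
    have := (le_div_iff₀ hγ0).mp hTD1
    nlinarith
  rw [max_eq_left hA'] at hA
  rw [max_eq_left hD'] at hD
  have hv : 0 < v := lt_trans hc hcv
  nlinarith [mul_pos hγ0 hv]
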